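/- arXiv:2507.10458 — 2 statements merged into one kernel-verified Lean document; each statement's English description precedes it below -/
import Mathlib

section
/- For a prime p and positive integer α, Ω_ρ(C_{p^α}) = α·p^α − (p^α − 1)/(p − 1), where C_{p^α} is the cyclic group of order p^α. -/
open ArithmeticFunction Finset
open scoped ArithmeticFunction.Omega

lemma cardFactors_prod {ι : Type*} [DecidableEq ι] (s : Finset ι) (f : ι → ℕ)
    (h : ∀ i ∈ s, f i ≠ 0) :
    Ω (∏ i ∈ s, f i) = ∑ i ∈ s, Ω (f i) := by
  induction s using Finset.induction with
  | empty => simp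
  | @insert a s hx ih =>
    rw [Finset.prod_insert hx, Finset.sum_insert hx,
      cardFactors_mul (h a (mem_insert_self a s))
        (Finset.prod_ne_zero_iff.2 fun i hi => h i (mem_insert_of_mem hi)),
      ih fun i hi => h i (mem_insert_of_mem hi)]

lemma geom_nat (p α : ℕ) (hp : 1 < p) : (p - 1) * ∑ j ∈ range α, p ^ j = p ^ α - 1 := by
  induction α with
  | zero => simp
  | succ n ih =>
    rw [Finset.sum_range_succ, Nat.mul_add, ih]
    have h1 : 1 ≤ p ^ n := Nat.one_le_pow _ _ (by omega)
    have h2 : (p - 1) * p ^ n = p * p ^ n - p ^ n := by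
      rw [Nat.sub_mul, one_mul]
    rw [h2, pow_succ, mul_comm (p ^ n) p]
    have h3 : p ^ n ≤ p * p ^ n := Nat.le_mul_of_pos_left _ (by omega)
    omega

-- Ω of order of nonzero element
lemma omega_ord (p α i : ℕ) (hp : p.Prime) (hi0 : i ≠ 0) (hilt : i < p ^ α) :
    Ω (p ^ α / Nat.gcd (p ^ α) i) = α - i.factorization p := by
  set v := i.factorization p with hv
  have hdvd : p ^ v ∣ i := Nat.ordProj_dvd i p
  have hvlt : v < α := by
    have h1 : p ^ v ≤ i := Nat.le_of_dvd (Nat.pos_of_ne_zero hi0) hdvd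
    by_contra h
    push_neg at h
    exact absurd (lt_of_le_of_lt (Nat.pow_le_pow_right hp.pos h) (h1.trans_lt hilt))
      (lt_irrefl _)
  have hgcd : Nat.gcd (p ^ α) i = p ^ v := by
    apply Nat.dvd_antisymm
    · obtain ⟨k, hk, hkeq⟩ := (Nat.dvd_prime_pow hp).1 (Nat.gcd_dvd_left (p ^ α) i)
      have : p ^ k ∣ i := hkeq ▸ Nat.gcd_dvd_right (p ^ α) i
      have hkv : k ≤ v := (Nat.Prime.pow_dvd_iff_le_factorization hp hi0).1 this
      exact hkeq ▸ pow_dvd_pow p hkv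
    · exact Nat.dvd_gcd (pow_dvd_pow p hvlt.le) hdvd
  rw [hgcd, Nat.pow_div hvlt.le hp.pos, cardFactors_apply_prime_pow hp]

-- valuation sum = valuation of factorial
lemma sum_val (p : ℕ) (hp : p.Prime) (m : ℕ) :
    ∑ i ∈ Finset.Ico 1 (m + 1), i.factorization p = padicValNat p (Nat.factorial m) := by
  haveI : Fact p.Prime := ⟨hp⟩
  induction m with
  | zero => simp
  | succ n ih =>
    rw [Finset.sum_Ico_succ_top (by omega), ih, Nat.factorial_succ,
      padicValNat.mul (by omega) (Nat.factorial_ne_zero n),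
      Nat.factorization_def _ hp, add_comm]

lemma legendre_eval (p α : ℕ) (hp : p.Prime) (hα : 0 < α) :
    padicValNat p (Nat.factorial (p ^ α - 1)) = (∑ j ∈ range α, p ^ j) - α := by
  haveI : Fact p.Prime := ⟨hp⟩
  have hp1 : 1 < p := hp.one_lt
  have hpow : 1 ≤ p ^ α := Nat.one_le_pow _ _ hp.pos
  have hpow1 : 1 < p ^ α := Nat.one_lt_pow (by omega) hp.one_lt
  have hlog : Nat.log p (p ^ α - 1) < α :=
    Nat.log_lt_of_lt_pow (by omega) (by omega)
  have := padicValNat_factorial (p := p) (n := p ^ α - 1) (b := α) hlog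
  rw [this]
  have hterm : ∀ i ∈ Finset.Ico 1 α, (p ^ α - 1) / p ^ i = p ^ (α - i) - 1 := by
    intro i hi
    simp only [Finset.mem_Ico] at hi
    have h1 : p ^ α = p ^ i * p ^ (α - i) := by rw [← pow_add]; congr 1; omega
    have h2 : 1 ≤ p ^ (α - i) := Nat.one_le_pow _ _ hp.pos
    have h3 : 1 ≤ p ^ i := Nat.one_le_pow _ _ hp.pos
    have h4 : p ^ α - 1 = p ^ i * (p ^ (α - i) - 1) + (p ^ i - 1) := by
      rw [Nat.mul_sub, mul_one, h1]
      have : p ^ i ≤ p ^ i * p ^ (α - i) := Nat.le_mul_of_pos_right _ (by omega)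
      omega
    rw [h4, Nat.mul_add_div (by omega), Nat.div_eq_of_lt (by omega), add_zero]
  rw [Finset.sum_congr rfl hterm,
    Finset.sum_tsub_distrib (f := fun i => p ^ (α - i)) (g := fun _ => 1) _
      (fun i _ => Nat.one_le_pow _ _ hp.pos)]
  have hre : ∑ i ∈ Finset.Ico 1 α, p ^ (α - i) = ∑ i ∈ Finset.Ico 1 α, p ^ i := by
    apply Finset.sum_nbij' (fun i => α - i) (fun i => α - i)
    all_goals intro a ha <;> simp only [Finset.mem_Ico] at * <;> omega
  have hsplit : ∑ j ∈ range α, p ^ j = p ^ 0 + ∑ i ∈ Finset.Ico 1 α, p ^ i := by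
    rw [Finset.range_eq_Ico, Finset.sum_eq_sum_Ico_succ_bot hα]
  have hcard : ∑ _x ∈ Finset.Ico 1 α, 1 = α - 1 := by
    rw [Finset.sum_const, Nat.card_Ico, smul_eq_mul, mul_one]
  rw [hre, hcard, hsplit]
  have hS : α - 1 ≤ ∑ i ∈ Finset.Ico 1 α, p ^ i := by
    calc α - 1 = ∑ _x ∈ Finset.Ico 1 α, 1 := hcard.symm
    _ ≤ _ := Finset.sum_le_sum fun i _ => Nat.one_le_pow _ _ hp.pos
  simp only [pow_zero]
  omega

lemma val_lt_alpha (p α i : ℕ) (hp : p.Prime) (hi0 : i ≠ 0) (hilt : i < p ^ α) :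
    i.factorization p < α := by
  have h1 : p ^ (i.factorization p) ≤ i :=
    Nat.le_of_dvd (Nat.pos_of_ne_zero hi0) (Nat.ordProj_dvd i p)
  by_contra h
  push_neg at h
  exact absurd (lt_of_le_of_lt (Nat.pow_le_pow_right hp.pos h) (h1.trans_lt hilt))
    (lt_irrefl _)

noncomputable def rho (G : Type*) [Group G] : ℕ := ∏ᶠ x : G, orderOf x

noncomputable def OmegaRho (G : Type*) [Group G] : ℕ :=
  ArithmeticFunction.cardFactors (rho G)

theorem omegaRho_cyclic_prime_pow (p α : ℕ) (hp : p.Prime) (hα : 0 < α) :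
    OmegaRho (Multiplicative (ZMod (p ^ α))) = α * p ^ α - (p ^ α - 1) / (p - 1) := by
  set n := p ^ α with hn
  have hn1 : 1 < n := Nat.one_lt_pow (by omega) hp.one_lt
  haveI : NeZero n := ⟨by omega⟩
  rw [OmegaRho, rho, finprod_eq_prod_of_fintype,
    cardFactors_prod _ _ (fun x _ => (orderOf_pos x).ne')]
  -- to additive
  have h1 : ∑ x : Multiplicative (ZMod n), Ω (orderOf x)
      = ∑ a : ZMod n, Ω (addOrderOf a) := by
    apply Fintype.sum_equiv Multiplicative.toAdd
    intro x
    rw [← orderOf_ofAdd_eq_addOrderOf]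
    rfl
  -- to range n
  have h2 : ∑ a : ZMod n, Ω (addOrderOf a)
      = ∑ i ∈ range n, Ω (addOrderOf (i : ZMod n)) := by
    apply Finset.sum_nbij' (fun a : ZMod n => a.val) (fun i => (i : ZMod n))
    · intro a _; exact Finset.mem_range.2 a.val_lt
    · intro i _; exact Finset.mem_univ _
    · intro a _; exact ZMod.natCast_rightInverse a
    · intro i hi; exact ZMod.val_cast_of_lt (Finset.mem_range.1 hi)
    · intro a _; rw [ZMod.natCast_rightInverse a]
  rw [h1, h2]
  -- split off i = 0
  rw [Finset.range_eq_Ico, Finset.sum_eq_sum_Ico_succ_bot (by omega : 0 < n)]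
  have h0 : Ω (addOrderOf ((0 : ℕ) : ZMod n)) = 0 := by
    simp
  rw [h0, zero_add]
  have h3 : ∀ i ∈ Finset.Ico 1 n, Ω (addOrderOf (i : ZMod n))
      = α - i.factorization p := by
    intro i hi
    simp only [Finset.mem_Ico] at hi
    rw [ZMod.addOrderOf_coe i (by omega : n ≠ 0), hn,
      omega_ord p α i hp (by omega) (hn ▸ hi.2)]
  have htsub : ∑ x ∈ Finset.Ico 1 n, (α - x.factorization p)
      = (∑ _x ∈ Finset.Ico 1 n, α) - ∑ x ∈ Finset.Ico 1 n, x.factorization p :=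
    Finset.sum_tsub_distrib _ (fun i hi => by
      simp only [Finset.mem_Ico] at hi
      exact (val_lt_alpha p α i hp (by omega) (hn ▸ hi.2)).le)
  rw [Finset.sum_congr rfl h3, htsub]
  have hIco : Finset.Ico 1 n = Finset.Ico 1 ((n - 1) + 1) := by congr 1; omega
  have h4 : ∑ i ∈ Finset.Ico 1 n, i.factorization p
      = (∑ j ∈ range α, p ^ j) - α := by
    rw [hIco, sum_val p hp (n - 1)]
    have : n - 1 = p ^ α - 1 := by rw [hn]
    rw [this, legendre_eval p α hp hα]
  have h5 : ∑ _i ∈ Finset.Ico 1 n, α = (n - 1) * α := by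
    rw [Finset.sum_const, Nat.card_Ico, smul_eq_mul]
  rw [h4, h5]
  set G := ∑ j ∈ range α, p ^ j with hG
  have hdiv : (p ^ α - 1) / (p - 1) = G := by
    apply Nat.div_eq_of_eq_mul_left (by have := hp.one_lt; omega)
    rw [mul_comm, geom_nat p α hp.one_lt]
  rw [hdiv]
  have hαG : α ≤ G := by
    calc α = ∑ _j ∈ range α, 1 := by simp
    _ ≤ G := Finset.sum_le_sum fun j _ => Nat.one_le_pow _ _ hp.pos
  have hmul : (n - 1) * α + α = α * n := by
    rw [Nat.sub_one_mul]
    have : α ≤ n * α := Nat.le_mul_of_pos_left α (by omega)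
    rw [mul_comm α n]
    omega
  omega
end

section
/- (Product rule) For finite groups A and B, Ω_ρ(A × B) ≤ Ω_ρ(A)·|B| + Ω_ρ(B)·|A|, with equality if and only if gcd(|A|, |B|) = 1. -/
open ArithmeticFunction Finset

lemma cardFactors_finset_prod {ι : Type*} (s : Finset ι) (f : ι → ℕ)
    (h : ∀ i ∈ s, f i ≠ 0) :
    cardFactors (∏ i ∈ s, f i) = ∑ i ∈ s, cardFactors (f i) := by
  classical
  induction s using Finset.induction with
  | empty => simp
  | insert _ _ hi ih =>
    rename_i a s
    rw [Finset.prod_insert hi, Finset.sum_insert hi,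
      cardFactors_mul (h a (Finset.mem_insert_self a s))
        (Finset.prod_ne_zero_iff.mpr fun i his => h i (Finset.mem_insert_of_mem his)),
      ih fun i his => h i (Finset.mem_insert_of_mem his)]

lemma cardFactors_eq_zero_iff_one {n : ℕ} (hn : n ≠ 0) :
    cardFactors n = 0 ↔ n = 1 := by
  rw [cardFactors_apply, List.length_eq_zero_iff, Nat.primeFactorsList_eq_nil]
  omega

lemma OmegaRho_eq (G : Type*) [Group G] [Fintype G] :
    OmegaRho G = ∑ x : G, cardFactors (orderOf x) := by
  rw [OmegaRho, rho, finprod_eq_prod_of_fintype,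
    cardFactors_finset_prod _ _ fun i _ => (orderOf_pos i).ne']

theorem omegaRho_prod_le (A B : Type*) [Group A] [Group B] [Finite A] [Finite B] :
    OmegaRho (A × B) ≤ OmegaRho A * Nat.card B + OmegaRho B * Nat.card A ∧
    (OmegaRho (A × B) = OmegaRho A * Nat.card B + OmegaRho B * Nat.card A ↔
      Nat.gcd (Nat.card A) (Nat.card B) = 1) := by
  classical
  have := Fintype.ofFinite A
  have := Fintype.ofFinite B
  -- key per-element identity
  have key : ∀ (x : A × B), cardFactors (orderOf x) + cardFactors (Nat.gcd (orderOf x.1) (orderOf x.2))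
      = cardFactors (orderOf x.1) + cardFactors (orderOf x.2) := by
    intro x
    have h1 : (orderOf x.1) ≠ 0 := (orderOf_pos _).ne'
    have h2 : (orderOf x.2) ≠ 0 := (orderOf_pos _).ne'
    have hg : Nat.gcd (orderOf x.1) (orderOf x.2) ≠ 0 := Nat.gcd_ne_zero_left h1
    have hl : Nat.lcm (orderOf x.1) (orderOf x.2) ≠ 0 := Nat.lcm_ne_zero h1 h2
    have := Nat.gcd_mul_lcm (orderOf x.1) (orderOf x.2)
    have h3 : cardFactors (Nat.gcd (orderOf x.1) (orderOf x.2) * Nat.lcm (orderOf x.1) (orderOf x.2))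
        = cardFactors (orderOf x.1 * orderOf x.2) := by rw [this]
    rw [cardFactors_mul hg hl, cardFactors_mul h1 h2] at h3
    rw [Prod.orderOf]
    omega
  have hsum : OmegaRho (A × B) + ∑ x : A × B, cardFactors (Nat.gcd (orderOf x.1) (orderOf x.2))
      = OmegaRho A * Nat.card B + OmegaRho B * Nat.card A := by
    rw [OmegaRho_eq, ← Finset.sum_add_distrib]
    simp_rw [key]
    rw [Finset.sum_add_distrib]
    rw [OmegaRho_eq A, OmegaRho_eq B, Nat.card_eq_fintype_card, Nat.card_eq_fintype_card]
    rw [Fintype.sum_prod_type, Fintype.sum_prod_type]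
    simp only [Finset.sum_const, Finset.card_univ, smul_eq_mul, ← Finset.mul_sum]
    ring
  constructor
  · omega
  · rw [show (OmegaRho (A × B) = OmegaRho A * Nat.card B + OmegaRho B * Nat.card A) ↔
        (∑ x : A × B, cardFactors (Nat.gcd (orderOf x.1) (orderOf x.2)) = 0) by omega]
    rw [Finset.sum_eq_zero_iff]
    constructor
    · intro h
      by_contra hne
      obtain ⟨p, hp, hpd⟩ := Nat.exists_prime_and_dvd hne
      have : Fact p.Prime := ⟨hp⟩
      obtain ⟨a, ha⟩ := exists_prime_orderOf_dvd_card' (G := A) p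
        (hpd.trans (Nat.gcd_dvd_left _ _))
      obtain ⟨b, hb⟩ := exists_prime_orderOf_dvd_card' (G := B) p
        (hpd.trans (Nat.gcd_dvd_right _ _))
      have := h (a, b) (Finset.mem_univ _)
      simp only at this
      rw [ha, hb, Nat.gcd_self, cardFactors_apply_prime hp] at this
      exact one_ne_zero this
    · intro h x _
      have h1 : orderOf x.1 ∣ Nat.card A := orderOf_dvd_natCard _
      have h2 : orderOf x.2 ∣ Nat.card B := orderOf_dvd_natCard _
      have : Nat.gcd (orderOf x.1) (orderOf x.2) ∣ Nat.gcd (Nat.card A) (Nat.card B) :=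
        Nat.dvd_gcd ((Nat.gcd_dvd_left _ _).trans h1) ((Nat.gcd_dvd_right _ _).trans h2)
      rw [h] at this
      rw [Nat.dvd_one.mp this]
      exact cardFactors_one
end
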